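/- Let ρ₁,…,ρₙ be arbitrary density matrices (possibly rank-deficient) and p a probability vector. Then for every density matrix σ: Σᵢ pᵢ F(ρᵢ, σ) ≤ √(Σ_{i,j} pᵢ pⱼ F(ρᵢ, ρⱼ)) (the Product bound). -/

import Mathlib

open Matrix BigOperators Finset ComplexOrder

variable {d n : ℕ}

open Classical in
/-- The positive semidefinite square root (zero if not PSD). -/
noncomputable def psqrt (A : Matrix (Fin d) (Fin d) ℂ) : Matrix (Fin d) (Fin d) ℂ :=
  if h : A.PosSemidef then
    h.1.eigenvectorUnitary.1 * diagonal ((↑) ∘ (√·) ∘ h.1.eigenvalues) *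
      (star h.1.eigenvectorUnitary : Matrix (Fin d) (Fin d) ℂ)
  else 0

/-- Trace norm ‖A‖₁ = Tr √(A*A). -/
noncomputable def traceNorm (A : Matrix (Fin d) (Fin d) ℂ) : ℝ :=
  ((psqrt (Aᴴ * A)).trace).re

/-- Fidelity F(ρ,σ) = Tr √(σ^{1/2} ρ σ^{1/2}). -/
noncomputable def fid (ρ σ : Matrix (Fin d) (Fin d) ℂ) : ℝ :=
  ((psqrt (psqrt σ * ρ * psqrt σ)).trace).re

/-- Density matrix: positive semidefinite with unit trace. -/
def IsDensity (ρ : Matrix (Fin d) (Fin d) ℂ) : Prop := ρ.PosSemidef ∧ ρ.trace = 1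

/-- Contraction: spectral norm at most one, i.e. 1 - UᴴU ⪰ 0. -/
def IsContraction (U : Matrix (Fin d) (Fin d) ℂ) : Prop := (1 - Uᴴ * U).PosSemidef

/-- Probability vector. -/
def IsProbVec (p : Fin n → ℝ) : Prop := (∀ i, 0 ≤ p i) ∧ ∑ i, p i = 1

/-!
By polar decomposition, `F(ρᵢ, σ) = ‖√ρᵢ √σ‖₁ = Re Tr (√σ Yᵢᴴ)` with `Yᵢ = √ρᵢ Uᵢ` for some
unitary `Uᵢ`: the fidelity is a Hilbert–Schmidt inner product `Re ⟪Yᵢ, √σ⟫`. Cauchy–Schwarz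
against `√σ`, whose Hilbert–Schmidt norm is `√(Tr σ) = 1`, bounds `Σ pᵢ F(ρᵢ, σ)` by
`‖Σ pᵢ Yᵢ‖ = √(Σ pᵢ pⱼ Re Tr (√ρⱼ Uⱼ Uᵢᴴ √ρᵢ))`, and each cross term is at most
`‖√ρᵢ √ρⱼ‖₁ = F(ρᵢ, ρⱼ)` because the trace norm dominates `Re Tr (A W)` for every unitary `W`.
No matrix is ever inverted, so rank-deficient states need no limiting argument.
-/

theorem LinearMap.exists_linearIsometry_comp_eq {𝕜 E V : Type*} [RCLike 𝕜] [AddCommGroup E]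
    [Module 𝕜 E] [NormedAddCommGroup V] [InnerProductSpace 𝕜 V] [FiniteDimensional 𝕜 V]
    (a q : E →ₗ[𝕜] V) (h : ∀ x, ‖a x‖ = ‖q x‖) : ∃ U : V →ₗᵢ[𝕜] V, ∀ x, U (q x) = a x := by
  have hker : LinearMap.ker q ≤ LinearMap.ker a := fun x hx => by
    rw [LinearMap.mem_ker] at hx ⊢
    rw [← norm_eq_zero, h, hx, norm_zero]
  let L : LinearMap.range q →ₗ[𝕜] V :=
    (LinearMap.ker q).liftQ a hker ∘ₗ q.quotKerEquivRange.symm.toLinearMap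
  have hL : ∀ x, L ⟨q x, LinearMap.mem_range_self q x⟩ = a x := fun x => by
    simp [L, LinearMap.quotKerEquivRange_symm_apply_image]
  have hL_norm : ∀ s, ‖L s‖ = ‖s‖ := by
    rintro ⟨-, x, rfl⟩
    exact (congrArg norm (hL x)).trans (h x)
  exact ⟨LinearIsometry.extend ⟨L, hL_norm⟩, fun x =>
    (LinearIsometry.extend_apply _ ⟨q x, LinearMap.mem_range_self q x⟩).trans (hL x)⟩

theorem sum_mul_re_inner_le {𝕜 E ι : Type*} [RCLike 𝕜] [SeminormedAddCommGroup E]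
    [InnerProductSpace 𝕜 E] [Fintype ι] (p : ι → ℝ) (y : ι → E) (z : E) :
    ∑ i, p i * RCLike.re (inner 𝕜 (y i) z) ≤
      ‖z‖ * √(∑ i, ∑ j, p i * p j * RCLike.re (inner 𝕜 (y i) (y j))) := by
  set x := ∑ i, (p i : 𝕜) • y i
  have hxz : ∑ i, p i * RCLike.re (inner 𝕜 (y i) z) = RCLike.re (inner 𝕜 x z) := by
    simp [x, sum_inner, inner_smul_left]
  have hxx : ∑ i, ∑ j, p i * p j * RCLike.re (inner 𝕜 (y i) (y j)) = ‖x‖ ^ 2 := by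
    rw [← inner_self_eq_norm_sq (𝕜 := 𝕜)]
    simp only [x, sum_inner, inner_sum, inner_smul_left, inner_smul_right, RCLike.conj_ofReal,
      map_sum, RCLike.re_ofReal_mul, mul_assoc, Finset.mul_sum]
    rw [Finset.sum_comm]
    exact Finset.sum_congr rfl fun _ _ => Finset.sum_congr rfl fun _ _ => mul_left_comm _ _ _
  rw [hxz, hxx, Real.sqrt_sq (norm_nonneg x), mul_comm]
  exact re_inner_le_norm x z

section HilbertSchmidt

variable {ι κ : Type*} [Fintype ι] [DecidableEq ι]

noncomputable abbrev hilbertSchmidtSeminormedAddCommGroup :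
    SeminormedAddCommGroup (Matrix ι ι ℂ) :=
  toMatrixSeminormedAddCommGroup 1 PosSemidef.one

attribute [local instance] hilbertSchmidtSeminormedAddCommGroup

noncomputable abbrev hilbertSchmidtInnerProductSpace : InnerProductSpace ℂ (Matrix ι ι ℂ) :=
  toMatrixInnerProductSpace 1 PosSemidef.one

attribute [local instance] hilbertSchmidtInnerProductSpace

lemma hilbertSchmidt_inner (X Y : Matrix ι ι ℂ) : inner ℂ X Y = (Y * Xᴴ).trace := by
  change (Y * 1 * Xᴴ).trace = _
  rw [Matrix.mul_one]

lemma hilbertSchmidt_norm (X : Matrix ι ι ℂ) : ‖X‖ = √(X * Xᴴ).trace.re := by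
  rw [norm_eq_sqrt_re_inner (𝕜 := ℂ), hilbertSchmidt_inner, RCLike.re_to_complex]

theorem re_trace_mul_conjTranspose_le (A B : Matrix ι ι ℂ) :
    (A * Bᴴ).trace.re ≤ √(A * Aᴴ).trace.re * √(B * Bᴴ).trace.re := by
  simpa only [hilbertSchmidt_inner, hilbertSchmidt_norm, RCLike.re_to_complex, mul_comm] using
    re_inner_le_norm (𝕜 := ℂ) B A

theorem sum_mul_re_trace_mul_conjTranspose_le [Fintype κ] (p : κ → ℝ) (Y : κ → Matrix ι ι ℂ)
    (Z : Matrix ι ι ℂ) :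
    ∑ k, p k * (Z * (Y k)ᴴ).trace.re ≤
      √(Z * Zᴴ).trace.re * √(∑ k, ∑ l, p k * p l * (Y l * (Y k)ᴴ).trace.re) := by
  simpa only [hilbertSchmidt_inner, hilbertSchmidt_norm, RCLike.re_to_complex] using
    sum_mul_re_inner_le (𝕜 := ℂ) p Y Z

end HilbertSchmidt

lemma psqrt_of_posSemidef {A : Matrix (Fin d) (Fin d) ℂ} (hA : A.PosSemidef) :
    psqrt A = hA.1.eigenvectorUnitary.1 * diagonal ((↑) ∘ (√·) ∘ hA.1.eigenvalues) *
      (star hA.1.eigenvectorUnitary : Matrix (Fin d) (Fin d) ℂ) :=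
  dif_pos hA

lemma posSemidef_psqrt {A : Matrix (Fin d) (Fin d) ℂ} (hA : A.PosSemidef) :
    (psqrt A).PosSemidef := by
  rw [psqrt_of_posSemidef hA]
  refine (PosSemidef.diagonal fun i => ?_).mul_mul_conjTranspose_same _
  simp [Real.sqrt_nonneg]

lemma isHermitian_psqrt (A : Matrix (Fin d) (Fin d) ℂ) : (psqrt A).IsHermitian := by
  by_cases hA : A.PosSemidef
  · exact (posSemidef_psqrt hA).isHermitian
  · simp [psqrt, hA, IsHermitian]

lemma psqrt_mul_psqrt {A : Matrix (Fin d) (Fin d) ℂ} (hA : A.PosSemidef) :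
    psqrt A * psqrt A = A := by
  set U : Matrix (Fin d) (Fin d) ℂ := ↑hA.1.eigenvectorUnitary
  have hUU : star U * U = 1 := Unitary.coe_star_mul_self _
  have hDD : diagonal (((↑) ∘ (√·) ∘ hA.1.eigenvalues : Fin d → ℂ)) *
      diagonal ((↑) ∘ (√·) ∘ hA.1.eigenvalues) = diagonal (RCLike.ofReal ∘ hA.1.eigenvalues) := by
    rw [diagonal_mul_diagonal]
    congr 1; funext i
    simp only [Function.comp_apply]
    rw [← Complex.ofReal_mul, Real.mul_self_sqrt (hA.eigenvalues_nonneg i)]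
    rfl
  conv_rhs => rw [hA.1.spectral_theorem, Unitary.conjStarAlgAut_apply, ← hDD]
  rw [psqrt_of_posSemidef hA]
  simp only [Matrix.mul_assoc]
  rw [← Matrix.mul_assoc (star U) U, hUU, Matrix.one_mul]

theorem exists_unitary_mul_psqrt (A : Matrix (Fin d) (Fin d) ℂ) :
    ∃ U ∈ unitaryGroup (Fin d) ℂ, A = U * psqrt (Aᴴ * A) := by
  set P := psqrt (Aᴴ * A)
  have hP : star P * P = star A * A := by
    rw [star_eq_conjTranspose, (isHermitian_psqrt _).eq,
      psqrt_mul_psqrt (posSemidef_conjTranspose_mul_self A), star_eq_conjTranspose]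
  let Φ := toEuclideanCLM (𝕜 := ℂ) (n := Fin d)
  have hnorm (x : EuclideanSpace ℂ (Fin d)) : ‖Φ A x‖ = ‖Φ P x‖ := by
    have : star (Φ A) * Φ A = star (Φ P) * Φ P := by simp only [← map_star, ← map_mul, hP]
    simp only [ContinuousLinearMap.apply_norm_eq_sqrt_inner_adjoint_left]
    exact congrArg (fun S : _ →L[ℂ] _ => √(RCLike.re (inner ℂ (S x) x))) this
  obtain ⟨V, hV⟩ :=
    LinearMap.exists_linearIsometry_comp_eq (Φ A).toLinearMap (Φ P).toLinearMap hnorm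
  let W := Unitary.linearIsometryEquiv.symm (V.toLinearIsometryEquiv rfl)
  refine ⟨Φ.symm W, Unitary.map_mem Φ.symm.toStarAlgHom W.2, ?_⟩
  apply EquivLike.injective Φ
  ext1 x
  rw [map_mul, StarAlgEquiv.apply_symm_apply]
  exact (hV x).symm

theorem exists_unitary_traceNorm_eq (A : Matrix (Fin d) (Fin d) ℂ) :
    ∃ U ∈ unitaryGroup (Fin d) ℂ, traceNorm A = (Uᴴ * A).trace.re := by
  obtain ⟨U, hU, hA⟩ := exists_unitary_mul_psqrt A
  refine ⟨U, hU, ?_⟩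
  conv_rhs => rw [hA, ← Matrix.mul_assoc, ← star_eq_conjTranspose, Unitary.star_mul_self_of_mem hU,
    Matrix.one_mul]
  rfl

theorem re_trace_mul_le_traceNorm (A : Matrix (Fin d) (Fin d) ℂ) {W : Matrix (Fin d) (Fin d) ℂ}
    (hW : W ∈ unitaryGroup (Fin d) ℂ) : (A * W).trace.re ≤ traceNorm A := by
  obtain ⟨U, hU, hA⟩ := exists_unitary_mul_psqrt A
  have hP := posSemidef_psqrt (posSemidef_conjTranspose_mul_self A)
  set P := psqrt (Aᴴ * A)
  set Q := psqrt P
  set V := W * U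
  have hQ : Qᴴ = Q := (isHermitian_psqrt P).eq
  have hQQ : Q * Q = P := psqrt_mul_psqrt hP
  have hV : V * Vᴴ = 1 := by
    rw [← star_eq_conjTranspose, ← mem_unitaryGroup_iff]
    exact mul_mem hW hU
  -- `Tr (A W) = Tr (Q V Q)`, and both `Q V` and `Q` have Hilbert–Schmidt norm `√(Tr P)`.
  have htrace : (A * W).trace = (Q * V * Qᴴ).trace := by
    rw [hA, hQ, Matrix.mul_assoc, trace_mul_comm, ← hQQ]
    simp only [V, Matrix.mul_assoc]
    rw [trace_mul_comm Q]
    simp only [Matrix.mul_assoc]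
  have hQV : Q * V * (Q * V)ᴴ = P := by
    rw [conjTranspose_mul, Matrix.mul_assoc, ← Matrix.mul_assoc V, hV, Matrix.one_mul, hQ, hQQ]
  have hPtr : 0 ≤ P.trace.re := (Complex.nonneg_iff.mp hP.trace_nonneg).1
  calc (A * W).trace.re = (Q * V * Qᴴ).trace.re := by rw [htrace]
    _ ≤ √(Q * V * (Q * V)ᴴ).trace.re * √(Q * Qᴴ).trace.re := re_trace_mul_conjTranspose_le _ _
    _ = traceNorm A := by rw [hQV, hQ, hQQ, Real.mul_self_sqrt hPtr]; rfl

theorem fid_eq_traceNorm {ρ : Matrix (Fin d) (Fin d) ℂ} (hρ : ρ.PosSemidef)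
    (σ : Matrix (Fin d) (Fin d) ℂ) : fid ρ σ = traceNorm (psqrt ρ * psqrt σ) := by
  have h : psqrt σ * ρ * psqrt σ = (psqrt ρ * psqrt σ)ᴴ * (psqrt ρ * psqrt σ) := by
    rw [conjTranspose_mul, (isHermitian_psqrt σ).eq, (isHermitian_psqrt ρ).eq, ← Matrix.mul_assoc,
      Matrix.mul_assoc (psqrt σ) (psqrt ρ), psqrt_mul_psqrt hρ]
  rw [fid, traceNorm, h]

theorem exists_unitary_fid_eq {ρ : Matrix (Fin d) (Fin d) ℂ} (hρ : ρ.PosSemidef)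
    (σ : Matrix (Fin d) (Fin d) ℂ) :
    ∃ U ∈ unitaryGroup (Fin d) ℂ, fid ρ σ = (psqrt σ * (psqrt ρ * U)ᴴ).trace.re := by
  obtain ⟨U, hU, h⟩ := exists_unitary_traceNorm_eq (psqrt ρ * psqrt σ)
  refine ⟨U, hU, ?_⟩
  rw [fid_eq_traceNorm hρ, h, conjTranspose_mul, (isHermitian_psqrt ρ).eq, ← Matrix.mul_assoc,
    trace_mul_cycle, Matrix.mul_assoc]

theorem re_trace_mul_conjTranspose_le_fid {ρ : Matrix (Fin d) (Fin d) ℂ} (hρ : ρ.PosSemidef)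
    (ρ' : Matrix (Fin d) (Fin d) ℂ) {U V : Matrix (Fin d) (Fin d) ℂ}
    (hU : U ∈ unitaryGroup (Fin d) ℂ) (hV : V ∈ unitaryGroup (Fin d) ℂ) :
    (psqrt ρ' * V * (psqrt ρ * U)ᴴ).trace.re ≤ fid ρ ρ' := by
  have hVU : V * Uᴴ ∈ unitaryGroup (Fin d) ℂ := by
    rw [← star_eq_conjTranspose]
    exact mul_mem hV (Unitary.star_mem hU)
  rw [fid_eq_traceNorm hρ, conjTranspose_mul, (isHermitian_psqrt ρ).eq, ← Matrix.mul_assoc,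
    trace_mul_comm]
  simpa only [Matrix.mul_assoc] using re_trace_mul_le_traceNorm (psqrt ρ * psqrt ρ') hVU

/-- Product bound: for an arbitrary ensemble of density matrices, the average fidelity of
any density matrix is at most √(Σ_{i,j} pᵢpⱼ F(ρᵢ,ρⱼ)). -/
theorem product_bound (ρ : Fin n → Matrix (Fin d) (Fin d) ℂ) (p : Fin n → ℝ)
    (hρ : ∀ i, IsDensity (ρ i)) (hp : IsProbVec p)
    (σ : Matrix (Fin d) (Fin d) ℂ) (hσ : IsDensity σ) :
    ∑ i, p i * fid (ρ i) σ ≤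
      Real.sqrt (∑ i, ∑ j, p i * p j * fid (ρ i) (ρ j)) := by
  choose U hU hfid using fun i => exists_unitary_fid_eq (hρ i).1 σ
  have hσ_norm : (psqrt σ * (psqrt σ)ᴴ).trace.re = 1 := by
    rw [(isHermitian_psqrt σ).eq, psqrt_mul_psqrt hσ.1, hσ.2, Complex.one_re]
  calc ∑ i, p i * fid (ρ i) σ = ∑ i, p i * (psqrt σ * (psqrt (ρ i) * U i)ᴴ).trace.re := by
        simp only [hfid]
    _ ≤ √(psqrt σ * (psqrt σ)ᴴ).trace.re * √(∑ i, ∑ j, p i * p j *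
          (psqrt (ρ j) * U j * (psqrt (ρ i) * U i)ᴴ).trace.re) :=
        sum_mul_re_trace_mul_conjTranspose_le p (fun i => psqrt (ρ i) * U i) (psqrt σ)
    _ ≤ √(∑ i, ∑ j, p i * p j * fid (ρ i) (ρ j)) := by
        rw [hσ_norm, Real.sqrt_one, one_mul]
        gcongr with i _ j _
        · exact mul_nonneg (hp.1 i) (hp.1 j)
        · exact re_trace_mul_conjTranspose_le_fid (hρ i).1 _ (hU i) (hU j)
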